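/- arXiv:1512.02285 — 9 statements merged into one kernel-verified Lean document; each statement's English description precedes it below -/
import Mathlib

section
/- Let 0 ≤ α ≤ 1 and let F be α-SR. Then for all v₁ ≤ v₂ with F(v₂) < 1, the hazard rate satisfies h(v₂) ≥ 1/((1−α)(v₂−v₁) + 1/h(v₁)). -/
open MeasureTheory Real Filter

/-- The virtual valuation function `φ(v) = v − (1 − F(v))/f(v)`. -/
noncomputable def virtualValue (F f : ℝ → ℝ) (v : ℝ) : ℝ := v - (1 - F v) / f v

/-- The hazard rate `h(v) = f(v)/(1 − F(v))`. -/
noncomputable def hazardRate (F f : ℝ → ℝ) (v : ℝ) : ℝ := f v / (1 - F v)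

/-- `F` is the CDF of a continuous distribution supported on `[0, ∞)`,
with density `f = F'` that is positive wherever `F < 1`. -/
structure IsCDF (F f : ℝ → ℝ) : Prop where
  zero : F 0 = 0
  mono : Monotone F
  le_one : ∀ v, F v ≤ 1
  tendsto_one : Tendsto F atTop (nhds 1)
  hasDeriv : ∀ v, 0 ≤ v → HasDerivAt F (f v) v
  f_pos : ∀ v, 0 ≤ v → F v < 1 → 0 < f v

/-- `F` is `α`-strongly regular: `φ(y) − φ(x) ≥ α (y − x)` for all `x < y` in the support. -/
def IsAlphaSR (α : ℝ) (F f : ℝ → ℝ) : Prop :=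
  ∀ x y, 0 ≤ x → x < y → F y < 1 →
    virtualValue F f y - virtualValue F f x ≥ α * (y - x)

theorem hazard_lower_bound (α : ℝ) (F f : ℝ → ℝ)
    (hα0 : 0 ≤ α) (hα1 : α ≤ 1)
    (hcdf : IsCDF F f) (hSR : IsAlphaSR α F f)
    (v₁ v₂ : ℝ) (hv₁ : 0 ≤ v₁) (h12 : v₁ ≤ v₂) (hv₂ : F v₂ < 1) :
    hazardRate F f v₂ ≥ 1 / ((1 - α) * (v₂ - v₁) + 1 / hazardRate F f v₁) := by

  have hv₁lt : F v₁ < 1 := lt_of_le_of_lt (hcdf.mono h12) hv₂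
  have hv₂0 : (0:ℝ) ≤ v₂ := le_trans hv₁ h12
  have hf₁ : 0 < f v₁ := hcdf.f_pos v₁ hv₁ hv₁lt
  have hf₂ : 0 < f v₂ := hcdf.f_pos v₂ hv₂0 hv₂
  have hF₁ : 0 < 1 - F v₁ := by linarith
  have hF₂ : 0 < 1 - F v₂ := by linarith
  set A : ℝ := (1 - F v₁) / f v₁ with hA
  set B : ℝ := (1 - F v₂) / f v₂ with hB
  have hApos : 0 < A := div_pos hF₁ hf₁
  have hBpos : 0 < B := div_pos hF₂ hf₂
  have hkey : B ≤ (1 - α) * (v₂ - v₁) + A := by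
    rcases eq_or_lt_of_le h12 with heq | hlt
    · subst heq; simp [hA, hB]
    · have := hSR v₁ v₂ hv₁ hlt hv₂
      simp only [virtualValue, ← hA, ← hB] at this
      nlinarith
  have hden : 0 < (1 - α) * (v₂ - v₁) + A := by nlinarith
  have h1A : 1 / hazardRate F f v₁ = A := by
    rw [hazardRate, one_div_div]
  rw [hazardRate, ge_iff_le, h1A]
  have : f v₂ / (1 - F v₂) = 1 / B := by
    rw [hB, one_div_div]
  rw [this]
  exact one_div_le_one_div_of_le hBpos hkey
end

section
/- Let 0 ≤ α ≤ 1 and let F be α-SR with differentiable density f. Then for all v₀ ≤ v with F(v) < 1, the density satisfies f(v) ≥ f(v₀) · ((1−F(v))/(1−F(v₀)))^{2−α}. -/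
/-! Strong regularity makes `φ' ≥ α`, and `φ' = 2 + (1 - F) f' / f²`; this says exactly that
`f · (1 - F)^(α - 2)` has nonnegative derivative, so it is nondecreasing on the support, which
is the claimed bound after rearranging. -/

open MeasureTheory Real Filter

open Set Topology

theorem HasDerivAt.le_of_eventually_le_slope {g : ℝ → ℝ} {x D α : ℝ} (hg : HasDerivAt g D x)
    (h : ∀ᶠ y in 𝓝[>] x, α ≤ slope g x y) : α ≤ D :=
  ge_of_tendsto (hasDerivAt_iff_tendsto_slope_left_right.1 hg).2 h

theorem hasDerivAt_virtualValue {F f : ℝ → ℝ} {x f' : ℝ} (hF : HasDerivAt F (f x) x)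
    (hf : HasDerivAt f f' x) (hfx : f x ≠ 0) :
    HasDerivAt (virtualValue F f) (2 + (1 - F x) * f' / f x ^ 2) x := by
  refine ((hasDerivAt_id x).sub ((hF.const_sub 1).div hf hfx)).congr_deriv ?_
  field_simp
  ring

namespace IsAlphaSR

variable {α : ℝ} {F f : ℝ → ℝ}

theorem le_deriv_virtualValue (hSR : IsAlphaSR α F f) (hcdf : IsCDF F f) {x D : ℝ}
    (hx : 0 ≤ x) (hFx : F x < 1) (hφ : HasDerivAt (virtualValue F f) D x) : α ≤ D := by
  refine hφ.le_of_eventually_le_slope ?_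
  have hF_lt : ∀ᶠ y in 𝓝 x, F y < 1 :=
    (hcdf.hasDeriv x hx).continuousAt.eventually_lt continuousAt_const hFx
  filter_upwards [nhdsWithin_le_nhds hF_lt, self_mem_nhdsWithin] with y hFy hxy
  rw [slope_def_field, le_div_iff₀ (sub_pos.2 hxy)]
  exact hSR x y hx hxy hFy

theorem sub_two_mul_sq_le (hSR : IsAlphaSR α F f) (hcdf : IsCDF F f) {x : ℝ} (hx : 0 ≤ x)
    (hFx : F x < 1) (hfd : DifferentiableAt ℝ f x) :
    (α - 2) * f x ^ 2 ≤ deriv f x * (1 - F x) := by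
  have hfx := hcdf.f_pos x hx hFx
  have hα := hSR.le_deriv_virtualValue hcdf hx hFx
    (hasDerivAt_virtualValue (hcdf.hasDeriv x hx) hfd.hasDerivAt hfx.ne')
  rw [← sub_le_iff_le_add', le_div_iff₀ (by positivity)] at hα
  linarith

end IsAlphaSR

theorem monotoneOn_mul_one_sub_rpow {F f : ℝ → ℝ} {κ : ℝ} {D : Set ℝ} (hD : Convex ℝ D)
    (hF : ∀ x ∈ D, HasDerivAt F (f x) x) (hf : ∀ x ∈ D, DifferentiableAt ℝ f x)
    (hF_lt : ∀ x ∈ D, F x < 1) (hκ : ∀ x ∈ D, κ * f x ^ 2 ≤ deriv f x * (1 - F x)) :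
    MonotoneOn (fun x ↦ f x * (1 - F x) ^ κ) D := by
  have hG : ∀ x ∈ D, HasDerivAt (fun x ↦ f x * (1 - F x) ^ κ)
      (deriv f x * (1 - F x) ^ κ + f x * (-f x * κ * (1 - F x) ^ (κ - 1))) x := fun x hx ↦
    (hf x hx).hasDerivAt.mul (((hF x hx).const_sub 1).rpow_const
      (Or.inl (sub_ne_zero.2 (hF_lt x hx).ne')))
  refine monotoneOn_of_hasDerivWithinAt_nonneg hD
    (fun x hx ↦ (hG x hx).continuousAt.continuousWithinAt)
    (fun x hx ↦ (hG x (interior_subset hx)).hasDerivWithinAt) fun x hx ↦ ?_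
  have hx := interior_subset hx
  have hB : 0 < 1 - F x := sub_pos.2 (hF_lt x hx)
  have hsplit : (1 - F x) ^ κ = (1 - F x) ^ (κ - 1) * (1 - F x) := by
    rw [← rpow_add_one hB.ne', sub_add_cancel]
  -- the derivative is `(1 - F)^(κ - 1) * (f' * (1 - F) - κ * f²)`
  rw [hsplit]
  nlinarith [mul_nonneg (rpow_pos_of_pos hB (κ - 1)).le (sub_nonneg.2 (hκ x hx))]

theorem mul_div_rpow_le_of_mul_rpow_neg_le {f₀ f₁ a b c : ℝ} (ha : 0 < a) (hb : 0 < b)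
    (h : f₀ * a ^ (-c) ≤ f₁ * b ^ (-c)) : f₀ * (b / a) ^ c ≤ f₁ :=
  calc f₀ * (b / a) ^ c = f₀ * a ^ (-c) * b ^ c := by
        rw [div_rpow hb.le ha.le, rpow_neg ha.le]; ring
    _ ≤ f₁ * b ^ (-c) * b ^ c := by gcongr
    _ = f₁ := by rw [mul_assoc, ← rpow_add hb, neg_add_cancel, rpow_zero, mul_one]

theorem density_lower_bound_general (α : ℝ) (F f : ℝ → ℝ)
    (hcdf : IsCDF F f)
    (hfd : ∀ v, 0 ≤ v → DifferentiableAt ℝ f v)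
    (hSR : IsAlphaSR α F f)
    (v₀ v : ℝ) (hv₀ : 0 ≤ v₀) (h0v : v₀ ≤ v) (hv : F v < 1) :
    f v ≥ f v₀ * (((1 - F v) / (1 - F v₀)) ^ (2 - α : ℝ)) := by
  have hnonneg : ∀ x ∈ Icc v₀ v, 0 ≤ x := fun x hx ↦ hv₀.trans hx.1
  have hF_lt : ∀ x ∈ Icc v₀ v, F x < 1 := fun x hx ↦ (hcdf.mono hx.2).trans_lt hv
  have hmono := monotoneOn_mul_one_sub_rpow (convex_Icc v₀ v)
    (fun x hx ↦ hcdf.hasDeriv x (hnonneg x hx)) (fun x hx ↦ hfd x (hnonneg x hx)) hF_lt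
    (fun x hx ↦ hSR.sub_two_mul_sq_le hcdf (hnonneg x hx) (hF_lt x hx) (hfd x (hnonneg x hx)))
  have hG := hmono (left_mem_Icc.2 h0v) (right_mem_Icc.2 h0v) h0v
  rw [← neg_sub] at hG
  exact mul_div_rpow_le_of_mul_rpow_neg_le (sub_pos.2 (hF_lt v₀ (left_mem_Icc.2 h0v)))
    (sub_pos.2 hv) hG

theorem density_lower_bound (α : ℝ) (F f : ℝ → ℝ)
    (hα0 : 0 ≤ α) (hα1 : α ≤ 1)
    (hcdf : IsCDF F f)
    (hfd : ∀ v, 0 ≤ v → DifferentiableAt ℝ f v)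
    (hSR : IsAlphaSR α F f)
    (v₀ v : ℝ) (hv₀ : 0 ≤ v₀) (h0v : v₀ ≤ v) (hv : F v < 1) :
    f v ≥ f v₀ * (((1 - F v) / (1 - F v₀)) ^ (2 - α : ℝ)) :=
  density_lower_bound_general α F f hcdf hfd hSR v₀ v hv₀ h0v hv
end

section
/- Let 0 < α < 1, let F be α-SR with differentiable density f, let λ > 0, and define F^α_λ(v) = 1 − (1 + ((1−α)/α)·(v/λ))^{−1/(1−α)} for v ≥ 0 (a rescaling of the worst-case α-SR distribution). If F(v₀) > F^α_λ(v₀) for some v₀ ≥ 0, then F(v) ≥ F^α_λ(v) for all v ≥ v₀ (single crossing property). -/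
open MeasureTheory Real Filter

/-- A rescaling (by `lam > 0` in the value coordinate) of the worst-case `α`-SR
distribution `F^α(v) = 1 − (1 + ((1−α)/α) v)^{−1/(1−α)}`. -/
noncomputable def worstCaseSR (α lam v : ℝ) : ℝ :=
  1 - (1 + ((1 - α) / α) * (v / lam)) ^ (-(1 / (1 - α)) : ℝ)

theorem single_crossing (α : ℝ) (F f : ℝ → ℝ)
    (hα0 : 0 < α) (hα1 : α < 1)
    (hcdf : IsCDF F f)
    (hfd : ∀ v, 0 ≤ v → DifferentiableAt ℝ f v)
    (hSR : IsAlphaSR α F f)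
    (lam : ℝ) (hlam : 0 < lam)
    (v₀ : ℝ) (hv₀ : 0 ≤ v₀) (hcross : F v₀ > worstCaseSR α lam v₀) :
    ∀ v, v₀ ≤ v → F v ≥ worstCaseSR α lam v := by
  have hα1' : (0:ℝ) < 1 - α := by linarith
  have hbpos : ∀ x : ℝ, 0 ≤ x → 0 < 1 + (1 - α) / α * (x / lam) := by
    intro x hx
    have : 0 ≤ (1 - α) / α * (x / lam) := by positivity
    linarith
  have hKpos : ∀ x : ℝ, 0 ≤ x → 0 < α * lam + (1 - α) * x := by
    intro x hx; nlinarith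
  have hG0 : worstCaseSR α lam 0 = 0 := by
    simp [worstCaseSR]
  have hGlt1 : ∀ x : ℝ, 0 ≤ x → worstCaseSR α lam x < 1 := by
    intro x hx
    have := Real.rpow_pos_of_pos (hbpos x hx) (-(1 / (1 - α)))
    unfold worstCaseSR
    linarith
  have hv0pos : 0 < v₀ := by
    rcases hv₀.lt_or_eq with h | h
    · exact h
    · exfalso
      rw [← h, hG0, hcdf.zero] at hcross
      exact lt_irrefl 0 hcross
  intro v hv
  by_contra hlt
  push_neg at hlt
  have hvv0 : v₀ < v := by
    rcases hv.lt_or_eq with h | h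
    · exact h
    · exfalso; rw [← h] at hlt; linarith
  have hvpos : 0 < v := lt_trans hv0pos hvv0
  have hFv1 : F v < 1 := lt_trans hlt (hGlt1 v hvpos.le)
  have hF1 : ∀ x, x ≤ v → F x < 1 := fun x hx => lt_of_le_of_lt (hcdf.mono hx) hFv1
  set Φ : ℝ → ℝ := fun x => Real.log (1 - F x) +
      (1 / (1 - α)) * Real.log (1 + (1 - α) / α * (x / lam)) with hΦdef
  have hΦderiv : ∀ x, 0 ≤ x → x ≤ v →
      HasDerivAt Φ (1 / (α * lam + (1 - α) * x) - f x / (1 - F x)) x := by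
    intro x hx hxv
    have hFx1 : F x < 1 := hF1 x hxv
    have h1F : (0:ℝ) < 1 - F x := by linarith
    have hb := hbpos x hx
    have h1 : HasDerivAt (fun y => 1 - F y) (-f x) x := (hcdf.hasDeriv x hx).const_sub 1
    have hlog1 : HasDerivAt (fun y => Real.log (1 - F y)) (-f x / (1 - F x)) x :=
      h1.log (ne_of_gt h1F)
    have h2 : HasDerivAt (fun y : ℝ => 1 + (1 - α) / α * (y / lam))
        ((1 - α) / α * (1 / lam)) x := by
      have := (((hasDerivAt_id x).div_const lam).const_mul ((1 - α) / α)).const_add 1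
      simpa using this
    have hlog2 : HasDerivAt (fun y => Real.log (1 + (1 - α) / α * (y / lam)))
        ((1 - α) / α * (1 / lam) / (1 + (1 - α) / α * (x / lam))) x :=
      h2.log (ne_of_gt hb)
    have hsum := hlog1.add (hlog2.const_mul (1 / (1 - α)))
    have key : (1:ℝ) / (α * lam + (1 - α) * x)
        = 1 / (1 - α) * ((1 - α) / α * (1 / lam) / (1 + (1 - α) / α * (x / lam))) := by
      have hKne : α * lam + (1 - α) * x ≠ 0 := ne_of_gt (hKpos x hx)
      have hbne : 1 + (1 - α) / α * (x / lam) ≠ 0 := ne_of_gt hb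
      field_simp
    have : (1 : ℝ) / (α * lam + (1 - α) * x) - f x / (1 - F x)
        = -f x / (1 - F x) + 1 / (1 - α) * ((1 - α) / α * (1 / lam) / (1 + (1 - α) / α * (x / lam))) := by
      rw [← key]; ring
    rw [this]
    exact hsum
  have hΦ0 : Φ 0 = 0 := by
    simp [hΦdef, hcdf.zero]
  have hlogG : ∀ x : ℝ, 0 ≤ x →
      Real.log ((1 + (1 - α) / α * (x / lam)) ^ (-(1 / (1 - α)) : ℝ))
        = -(1 / (1 - α)) * Real.log (1 + (1 - α) / α * (x / lam)) :=
    fun x hx => Real.log_rpow (hbpos x hx) _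
  have hFv₀1 : F v₀ < 1 := hF1 v₀ hv
  have hΦv₀ : Φ v₀ < 0 := by
    have h1 : 1 - F v₀ < (1 + (1 - α) / α * (v₀ / lam)) ^ (-(1 / (1 - α)) : ℝ) := by
      unfold worstCaseSR at hcross; linarith
    have h2 : (0:ℝ) < 1 - F v₀ := by linarith
    have h3 := Real.log_lt_log h2 h1
    rw [hlogG v₀ hv₀] at h3
    simp only [hΦdef]
    linarith
  have hΦv : 0 < Φ v := by
    have h1 : (1 + (1 - α) / α * (v / lam)) ^ (-(1 / (1 - α)) : ℝ) < 1 - F v := by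
      unfold worstCaseSR at hlt; linarith
    have h3 := Real.log_lt_log (Real.rpow_pos_of_pos (hbpos v hvpos.le) _) h1
    rw [hlogG v hvpos.le] at h3
    simp only [hΦdef]
    linarith
  -- first MVT on [v₀, v]
  have hcont : ContinuousOn Φ (Set.Icc v₀ v) := fun x hx =>
    ((hΦderiv x (hv₀.trans hx.1) hx.2).continuousAt).continuousWithinAt
  obtain ⟨ξ, hξmem, hξ⟩ := exists_hasDerivAt_eq_slope Φ
    (fun x => 1 / (α * lam + (1 - α) * x) - f x / (1 - F x)) hvv0 hcont
    (fun x hx => hΦderiv x (hv₀.trans hx.1.le) hx.2.le)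
  have hξ0 : 0 ≤ ξ := hv₀.trans hξmem.1.le
  have hFξ1 : F ξ < 1 := hF1 ξ hξmem.2.le
  have h1Fξ : (0:ℝ) < 1 - F ξ := by linarith
  have hfξ : 0 < f ξ := hcdf.f_pos ξ hξ0 hFξ1
  have hKξ : 0 < α * lam + (1 - α) * ξ := hKpos ξ hξ0
  have hDξ : 0 < 1 / (α * lam + (1 - α) * ξ) - f ξ / (1 - F ξ) := by
    rw [hξ]
    exact div_pos (by linarith) (by linarith)
  have Hξ : α * lam + (1 - α) * ξ < (1 - F ξ) / f ξ := by
    have h4 : f ξ * (α * lam + (1 - α) * ξ) < 1 * (1 - F ξ) :=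
      (div_lt_div_iff₀ h1Fξ hKξ).mp (by linarith)
    rw [lt_div_iff₀ hfξ]
    nlinarith
  -- SR pushes the inequality to the left of ξ
  have hH : ∀ x, 0 ≤ x → x < ξ → α * lam + (1 - α) * x < (1 - F x) / f x := by
    intro x hx hxξ
    have hsr := hSR x ξ hx hxξ hFξ1
    unfold virtualValue at hsr
    linarith
  -- second MVT on [0, v₀]
  have hcont2 : ContinuousOn Φ (Set.Icc 0 v₀) := fun x hx =>
    ((hΦderiv x hx.1 (hx.2.trans hv)).continuousAt).continuousWithinAt
  obtain ⟨η, hηmem, hη⟩ := exists_hasDerivAt_eq_slope Φ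
    (fun x => 1 / (α * lam + (1 - α) * x) - f x / (1 - F x)) hv0pos hcont2
    (fun x hx => hΦderiv x hx.1.le (hx.2.le.trans hv))
  have hη0 : 0 < η := hηmem.1
  have hFη1 : F η < 1 := hF1 η (hηmem.2.le.trans hv)
  have h1Fη : (0:ℝ) < 1 - F η := by linarith
  have hfη : 0 < f η := hcdf.f_pos η hη0.le hFη1
  have hKη : 0 < α * lam + (1 - α) * η := hKpos η hη0.le
  have hDη : 1 / (α * lam + (1 - α) * η) - f η / (1 - F η) < 0 := by
    rw [hη]
    apply div_neg_of_neg_of_pos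
    · rw [hΦ0]; linarith
    · linarith
  have Hη : (1 - F η) / f η < α * lam + (1 - α) * η := by
    have h4 : 1 * (1 - F η) < f η * (α * lam + (1 - α) * η) :=
      (div_lt_div_iff₀ hKη h1Fη).mp (by linarith)
    rw [div_lt_iff₀ hfη]
    nlinarith
  have := hH η hη0.le (hηmem.2.trans hξmem.1)
  linarith
end

section
/- Let 0 < α < 1 and let F be α-SR with differentiable density f and with finite mean, i.e. ∫₀^∞ (1−F(v)) dv < ∞. Then (α/(1+α)) · ∫₀^∞ (1−F(v)) dv ≤ ∫₀^∞ (1−F(v))² dv. -/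
open MeasureTheory Real Filter

/-!
Write `G = 1 - F` and `Q = G / f` (the Mills ratio), so that `φ = id - Q`. Strong regularity
says `Q' ≤ 1 - α`, which is exactly what makes `S = Q G ^ (1 - α)` nonincreasing on the support.
With `c = α / (1 + α)` and `A = G ^ α F / (1 + α)` one has `A' = f G ^ (α - 1) (G - c)` and
`G (G - c) = S A'`. Since `A'` changes sign from `+` to `-` at the point `v₀` where `G = c`,
monotonicity of `S` gives `G (G - c) ≥ S(v₀) A'` everywhere, hence
`∫₀ᵀ G (G - c) ≥ S(v₀) A(T)`, and `A(T) → 0` as `T → ∞`.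
-/

open Set Topology

namespace IsCDF

variable {F f : ℝ → ℝ}

theorem continuousAt (hF : IsCDF F f) {v : ℝ} (hv : 0 ≤ v) : ContinuousAt F v :=
  (hF.hasDeriv v hv).continuousAt

theorem hasDerivAt_one_sub (hF : IsCDF F f) {v : ℝ} (hv : 0 ≤ v) :
    HasDerivAt (fun y => 1 - F y) (-f v) v := by
  simpa using (hF.hasDeriv v hv).const_sub 1

theorem one_sub_nonneg (hF : IsCDF F f) (v : ℝ) : 0 ≤ 1 - F v :=
  sub_nonneg.2 (hF.le_one v)

theorem one_sub_le_one (hF : IsCDF F f) {v : ℝ} (hv : 0 ≤ v) : 1 - F v ≤ 1 := by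
  have := hF.mono hv
  rw [hF.zero] at this
  linarith

theorem density_eq_zero_of_eq_one (hF : IsCDF F f) {v : ℝ} (hv : 0 ≤ v) (hFv : F v = 1) :
    f v = 0 :=
  IsLocalMax.hasDerivAt_eq_zero (Eventually.of_forall fun y => hFv ▸ hF.le_one y)
    (hF.hasDeriv v hv)

theorem tendsto_one_sub_atTop (hF : IsCDF F f) : Tendsto (fun v => 1 - F v) atTop (𝓝 0) := by
  simpa using hF.tendsto_one.const_sub 1

theorem exists_one_sub_eq (hF : IsCDF F f) {c : ℝ} (hc0 : 0 < c) (hc1 : c ≤ 1) :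
    ∃ v, 0 ≤ v ∧ 1 - F v = c := by
  obtain ⟨w, hw, hw0⟩ := ((hF.tendsto_one_sub_atTop.eventually (gt_mem_nhds hc0)).and
    (eventually_ge_atTop 0)).exists
  have hcont : ContinuousOn (fun v => 1 - F v) (Icc 0 w) := fun v hv =>
    (hF.hasDerivAt_one_sub hv.1).continuousAt.continuousWithinAt
  obtain ⟨v, hv, hvc⟩ := intermediate_value_Icc' hw0 hcont ⟨hw.le, by simpa [hF.zero] using hc1⟩
  exact ⟨v, hv.1, hvc⟩

theorem integrableOn_one_sub_sq (hF : IsCDF F f)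
    (hmean : IntegrableOn (fun v => 1 - F v) (Ioi 0)) :
    IntegrableOn (fun v => (1 - F v) ^ 2) (Ioi 0) := by
  refine hmean.mono' ?_ ((ae_restrict_iff' measurableSet_Ioi).2 (ae_of_all _ fun v hv => ?_))
  · exact ContinuousOn.aestronglyMeasurable (fun v hv =>
      ((hF.hasDerivAt_one_sub (le_of_lt hv)).continuousAt.pow 2).continuousWithinAt)
      measurableSet_Ioi
  · rw [Real.norm_eq_abs, abs_of_nonneg (sq_nonneg _), sq]
    exact mul_le_of_le_one_left (hF.one_sub_nonneg v) (hF.one_sub_le_one (le_of_lt hv))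

end IsCDF

noncomputable def millsRatio (F f : ℝ → ℝ) (v : ℝ) : ℝ := (1 - F v) / f v

noncomputable def scaledMillsRatio (α : ℝ) (F f : ℝ → ℝ) (v : ℝ) : ℝ :=
  millsRatio F f v * (1 - F v) ^ (1 - α)

section StronglyRegular

variable {α : ℝ} {F f : ℝ → ℝ}

theorem IsCDF.differentiableAt_millsRatio (hF : IsCDF F f)
    (hfd : ∀ v, 0 ≤ v → DifferentiableAt ℝ f v) {v : ℝ} (hv : 0 ≤ v) (hFv : F v < 1) :
    DifferentiableAt ℝ (millsRatio F f) v :=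
  (hF.hasDerivAt_one_sub hv).differentiableAt.div (hfd v hv) (hF.f_pos v hv hFv).ne'

theorem IsCDF.millsRatio_mul_density (hF : IsCDF F f) {v : ℝ} (hv : 0 ≤ v) (hFv : F v < 1) :
    millsRatio F f v * f v = 1 - F v :=
  div_mul_cancel₀ _ (hF.f_pos v hv hFv).ne'

theorem IsAlphaSR.deriv_millsRatio_le (hSR : IsAlphaSR α F f) (hF : IsCDF F f)
    (hfd : ∀ v, 0 ≤ v → DifferentiableAt ℝ f v) {v : ℝ} (hv : 0 ≤ v) (hFv : F v < 1) :
    deriv (millsRatio F f) v ≤ 1 - α := by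
  have hφ : HasDerivAt (virtualValue F f) (1 - deriv (millsRatio F f) v) v :=
    (hasDerivAt_id v).sub (hF.differentiableAt_millsRatio hfd hv hFv).hasDerivAt
  have hslope : ∀ᶠ y in 𝓝[>] v, α ≤ slope (virtualValue F f) v y := by
    have hF_lt : ∀ᶠ y in 𝓝 v, F y < 1 := (hF.continuousAt hv).eventually (gt_mem_nhds hFv)
    filter_upwards [nhdsWithin_le_nhds hF_lt, self_mem_nhdsWithin] with y hFy hvy
    rw [slope_def_field, le_div_iff₀ (sub_pos.2 hvy)]
    exact hSR v y hv hvy hFy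
  have := ge_of_tendsto ((hasDerivWithinAt_iff_tendsto_slope' self_notMem_Ioi).1
    hφ.hasDerivWithinAt) hslope
  linarith

theorem IsAlphaSR.antitoneOn_scaledMillsRatio (hSR : IsAlphaSR α F f) (hF : IsCDF F f)
    (hfd : ∀ v, 0 ≤ v → DifferentiableAt ℝ f v) :
    AntitoneOn (scaledMillsRatio α F f) (Ici 0 ∩ {v | F v < 1}) := by
  have hconvex : Convex ℝ (Ici (0 : ℝ) ∩ {v | F v < 1}) :=
    (convex_Ici 0).inter
      (IsLowerSet.ordConnected fun _ _ hab hb => (hF.mono hab).trans_lt hb).convex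
  have hderiv : ∀ v ∈ Ici (0 : ℝ) ∩ {v | F v < 1}, HasDerivAt (scaledMillsRatio α F f)
      ((1 - F v) ^ (1 - α) * (deriv (millsRatio F f) v - (1 - α))) v := by
    rintro v ⟨hv, hFv : F v < 1⟩
    have hG : 0 < 1 - F v := sub_pos.2 hFv
    refine ((hF.differentiableAt_millsRatio hfd hv hFv).hasDerivAt.mul
      ((hF.hasDerivAt_one_sub hv).rpow_const (p := 1 - α) (Or.inl hG.ne'))).congr_deriv ?_
    rw [Real.rpow_sub_one hG.ne', millsRatio]
    field_simp [(hF.f_pos v hv hFv).ne']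
    ring
  refine antitoneOn_of_hasDerivWithinAt_nonpos hconvex
    (fun v hv => (hderiv v hv).continuousAt.continuousWithinAt)
    (fun v hv => (hderiv v (interior_subset hv)).hasDerivWithinAt) fun v hv => ?_
  obtain ⟨hv, hFv⟩ := interior_subset hv
  exact mul_nonpos_of_nonneg_of_nonpos (Real.rpow_nonneg (hF.one_sub_nonneg v) _)
    (sub_nonpos.2 (hSR.deriv_millsRatio_le hF hfd hv hFv))

theorem IsCDF.hasDerivAt_rpow_mul_div (hF : IsCDF F f) (hα : 1 + α ≠ 0) {v : ℝ} (hv : 0 ≤ v)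
    (hFv : F v < 1) :
    HasDerivAt (fun y => (1 - F y) ^ α * F y / (1 + α))
      (f v * (1 - F v) ^ (α - 1) * (1 - F v - α / (1 + α))) v := by
  have hG : 0 < 1 - F v := sub_pos.2 hFv
  refine ((((hF.hasDerivAt_one_sub hv).rpow_const (p := α) (Or.inl hG.ne')).mul
    (hF.hasDeriv v hv)).div_const (1 + α)).congr_deriv ?_
  rw [Real.rpow_sub_one hG.ne']
  field_simp
  ring

theorem IsAlphaSR.scaledMillsRatio_mul_le (hSR : IsAlphaSR α F f) (hF : IsCDF F f)
    (hfd : ∀ v, 0 ≤ v → DifferentiableAt ℝ f v) {v v₀ : ℝ} (hv : 0 ≤ v) (hv₀ : 0 ≤ v₀)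
    (hFv₀ : F v₀ < 1) :
    scaledMillsRatio α F f v₀ * (f v * (1 - F v) ^ (α - 1) * (F v₀ - F v)) ≤
      (1 - F v) * (F v₀ - F v) := by
  by_cases hFv : F v < 1
  · have hG : 0 < 1 - F v := sub_pos.2 hFv
    have hS : scaledMillsRatio α F f v * (f v * (1 - F v) ^ (α - 1)) = 1 - F v := by
      rw [scaledMillsRatio, mul_mul_mul_comm, hF.millsRatio_mul_density hv hFv,
        ← Real.rpow_add hG, sub_add_sub_cancel', sub_self, Real.rpow_zero, mul_one]
    have hanti := hSR.antitoneOn_scaledMillsRatio hF hfd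
    have hpow : 0 ≤ f v * (1 - F v) ^ (α - 1) :=
      mul_nonneg (hF.f_pos v hv hFv).le (Real.rpow_nonneg hG.le _)
    have hsign : 0 ≤ (scaledMillsRatio α F f v - scaledMillsRatio α F f v₀) *
        (f v * (1 - F v) ^ (α - 1) * (F v₀ - F v)) := by
      rcases le_total v v₀ with hvv₀ | hv₀v
      · exact mul_nonneg (sub_nonneg.2 (hanti ⟨hv, hFv⟩ ⟨hv₀, hFv₀⟩ hvv₀))
          (mul_nonneg hpow (sub_nonneg.2 (hF.mono hvv₀)))
      · exact mul_nonneg_of_nonpos_of_nonpos (sub_nonpos.2 (hanti ⟨hv₀, hFv₀⟩ ⟨hv, hFv⟩ hv₀v))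
          (mul_nonpos_of_nonneg_of_nonpos hpow (sub_nonpos.2 (hF.mono hv₀v)))
    calc scaledMillsRatio α F f v₀ * (f v * (1 - F v) ^ (α - 1) * (F v₀ - F v))
        ≤ scaledMillsRatio α F f v * (f v * (1 - F v) ^ (α - 1) * (F v₀ - F v)) := by
          linarith
      _ = (1 - F v) * (F v₀ - F v) := by rw [← mul_assoc, hS]
  · have hFv : F v = 1 := le_antisymm (hF.le_one v) (not_lt.1 hFv)
    simp [hF.density_eq_zero_of_eq_one hv hFv, hFv]

theorem IsAlphaSR.le_intervalIntegral (hSR : IsAlphaSR α F f) (hF : IsCDF F f)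
    (hfd : ∀ v, 0 ≤ v → DifferentiableAt ℝ f v) (hα : 0 < α) {v₀ : ℝ} (hv₀ : 0 ≤ v₀)
    (hFv₀ : 1 - F v₀ = α / (1 + α)) {T : ℝ} (hT : 0 ≤ T) :
    scaledMillsRatio α F f v₀ * ((1 - F T) ^ α * F T / (1 + α)) ≤
      ∫ v in (0 : ℝ)..T, ((1 - F v) ^ 2 - α / (1 + α) * (1 - F v)) := by
  set S₀ := scaledMillsRatio α F f v₀
  have hα' : 1 + α ≠ 0 := by positivity
  have hFv₀_lt : F v₀ < 1 := by
    have : 0 < α / (1 + α) := by positivity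
    linarith
  have hcont : ContinuousOn (fun y => S₀ * ((1 - F y) ^ α * F y / (1 + α))) (Icc 0 T) :=
    fun y hy => (((hF.hasDerivAt_one_sub hy.1).continuousAt.rpow_const (Or.inr hα.le)).mul
      (hF.continuousAt hy.1) |>.div_const _ |>.const_mul _).continuousWithinAt
  have hderiv : ∀ x ∈ Ioo 0 T, HasDerivWithinAt (fun y => S₀ * ((1 - F y) ^ α * F y / (1 + α)))
      (S₀ * (f x * (1 - F x) ^ (α - 1) * (1 - F x - α / (1 + α)))) (Ioi x) x := by
    intro x hx
    by_cases hFx : F x < 1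
    · exact ((hF.hasDerivAt_rpow_mul_div hα' hx.1.le hFx).const_mul S₀).hasDerivWithinAt
    · have hFx : F x = 1 := le_antisymm (hF.le_one x) (not_lt.1 hFx)
      have hF1 : ∀ y, x ≤ y → F y = 1 := fun y hy =>
        le_antisymm (hF.le_one y) (hFx ▸ hF.mono hy)
      refine ((hasDerivWithinAt_const x (Ioi x) 0).congr (fun y hy => ?_) ?_).congr_deriv ?_
      · simp [hF1 y (le_of_lt hy), hα.ne']
      · simp [hFx, hα.ne']
      · simp [hF.density_eq_zero_of_eq_one hx.1.le hFx]
  have hint : IntegrableOn (fun v => (1 - F v) ^ 2 - α / (1 + α) * (1 - F v)) (Icc 0 T) :=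
    ContinuousOn.integrableOn_Icc fun y hy =>
      (((hF.hasDerivAt_one_sub hy.1).continuousAt.pow 2).sub
        ((hF.hasDerivAt_one_sub hy.1).continuousAt.const_mul _)).continuousWithinAt
  have hpt : ∀ x ∈ Ioo 0 T, S₀ * (f x * (1 - F x) ^ (α - 1) * (1 - F x - α / (1 + α))) ≤
      (1 - F x) ^ 2 - α / (1 + α) * (1 - F x) := by
    intro x hx
    have := hSR.scaledMillsRatio_mul_le hF hfd hx.1.le hv₀ hFv₀_lt
    rw [← hFv₀, sub_sub_sub_cancel_left]
    linarith
  simpa [hF.zero] using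
    intervalIntegral.sub_le_integral_of_hasDeriv_right_of_le hT hcont hderiv hint hpt

end StronglyRegular

theorem square_integral_bound_general (α : ℝ) (F f : ℝ → ℝ)
    (hα0 : 0 < α)
    (hcdf : IsCDF F f)
    (hfd : ∀ v, 0 ≤ v → DifferentiableAt ℝ f v)
    (hSR : IsAlphaSR α F f)
    (hmean : IntegrableOn (fun v => 1 - F v) (Set.Ioi 0)) :
    (α / (1 + α)) * ∫ v in Set.Ioi (0 : ℝ), (1 - F v) ≤
      ∫ v in Set.Ioi (0 : ℝ), (1 - F v) ^ 2 := by
  have hc0 : 0 < α / (1 + α) := by positivity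
  have hc1 : α / (1 + α) ≤ 1 := (div_le_one (by positivity)).2 (by linarith)
  obtain ⟨v₀, hv₀, hFv₀⟩ := hcdf.exists_one_sub_eq hc0 hc1
  have hsq := hcdf.integrableOn_one_sub_sq hmean
  have hlower : Tendsto (fun T => scaledMillsRatio α F f v₀ * ((1 - F T) ^ α * F T / (1 + α)))
      atTop (𝓝 0) := by
    simpa using (((hcdf.tendsto_one_sub_atTop.rpow_const_nhds_zero hα0).mul
      hcdf.tendsto_one).div_const (1 + α)).const_mul (scaledMillsRatio α F f v₀)
  have hdiff : IntegrableOn (fun v => (1 - F v) ^ 2 - α / (1 + α) * (1 - F v)) (Ioi 0) :=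
    hsq.sub (hmean.const_mul _)
  have hupper := intervalIntegral_tendsto_integral_Ioi 0 hdiff tendsto_id
  have hnonneg := le_of_tendsto_of_tendsto hlower hupper <| (eventually_ge_atTop 0).mono
    fun T hT => hSR.le_intervalIntegral hcdf hfd hα0 hv₀ hFv₀ hT
  rw [integral_sub hsq (hmean.const_mul _), integral_const_mul] at hnonneg
  linarith

theorem square_integral_bound (α : ℝ) (F f : ℝ → ℝ)
    (hα0 : 0 < α) (hα1 : α < 1)
    (hcdf : IsCDF F f)
    (hfd : ∀ v, 0 ≤ v → DifferentiableAt ℝ f v)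
    (hSR : IsAlphaSR α F f)
    (hmean : IntegrableOn (fun v => 1 - F v) (Set.Ioi 0)) :
    (α / (1 + α)) * ∫ v in Set.Ioi (0 : ℝ), (1 - F v) ≤
      ∫ v in Set.Ioi (0 : ℝ), (1 - F v) ^ 2 :=
  square_integral_bound_general α F f hα0 hcdf hfd hSR hmean
end

section
/- Let 0 < α < 1, let F be α-SR with finite mean, and let r > 0 be a monopoly price of F, i.e. φ(r) = 0. Define the revenue function R̂(s) = s·(1−F(s)) and the posted-price welfare V(t) = t·(1−F(t)) + ∫_t^∞ (1−F(v)) dv. Then for every t ≥ 0, R̂(max{t, r}) ≥ α^{1/(1−α)} · V(t). -/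
open MeasureTheory Real Filter

/-!
With `ℓ v = (1 - α) v + α r`, strong regularity and `φ(r) = 0` give `(1 - F)/f ≥ ℓ` below `r` and
`≤ ℓ` above it. So the ratio `(1 - F) ℓ ^ (1/(1-α))` of the tail of `F` to the tail of the extremal
`α`-SR distribution increases up to `r` and decreases after it. On `[t, ∞)` the tail of `F` is thus
dominated by the extremal tail scaled to agree with it at `max t r`, and the inequality reduces to
the extremal distribution, where both sides are explicit: for `t ≥ r` it follows from
`α ^ (1/(1-α)) (1 + α) ≤ α`, for `t < r` from Bernoulli's inequality.
-/

open Set Topology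

theorem rpow_one_div_one_sub_mul_one_add_le_self {α : ℝ} (hα0 : 0 < α) (hα1 : α < 1) :
    α ^ (1 / (1 - α)) * (1 + α) ≤ α := by
  have h1α : 0 < 1 - α := by linarith
  suffices log (α ^ (1 / (1 - α)) * (1 + α)) ≤ log α from
    (log_le_log_iff (by positivity) hα0).1 this
  have hlogα : log α * α / (1 - α) ≤ -α := by
    rw [div_le_iff₀ h1α]
    nlinarith [log_le_sub_one_of_pos hα0]
  have hlog1 : log (1 + α) ≤ α := by linarith [log_le_sub_one_of_pos (by linarith : 0 < 1 + α)]
  have hsplit : 1 / (1 - α) * log α = log α + log α * α / (1 - α) := by field_simp; ring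
  rw [log_mul (by positivity) (by positivity), log_rpow hα0, hsplit]
  linarith

theorem rpow_one_div_mul_add_le_mul_add_mul_rpow {a c x : ℝ} (ha : 0 < a) (hc0 : 0 < c)
    (hc1 : c ≤ 1) (hx : 0 ≤ x) :
    a ^ (1 / c) * (a + x) ≤ a * (a + c * x) ^ (1 / c) := by
  have hbern := one_add_mul_self_le_rpow_one_add (s := c * x / a)
    (by linarith [show 0 ≤ c * x / a by positivity]) (p := 1 / c)
    (by rw [le_div_iff₀ hc0]; linarith)
  rw [show 1 + c * x / a = (a + c * x) / a by field_simp, div_rpow (by positivity) ha.le,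
    le_div_iff₀ (by positivity)] at hbern
  rw [show 1 / c * (c * x / a) = x / a by field_simp] at hbern
  calc a ^ (1 / c) * (a + x) = a * ((1 + x / a) * a ^ (1 / c)) := by field_simp
    _ ≤ a * (a + c * x) ^ (1 / c) := by gcongr

section AffineRpow

variable {c d p t : ℝ}

theorem hasDerivAt_affine_rpow_one_sub (hc : 0 < c) (hp : 1 < p) {v : ℝ} (hv : 0 < c * v + d) :
    HasDerivAt (fun w => -((c * w + d) ^ (1 - p) / (c * (p - 1)))) ((c * v + d) ^ (-p)) v := by
  have hL : HasDerivAt (fun w => c * w + d) c v := by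
    simpa using ((hasDerivAt_id v).const_mul c).add_const d
  refine ((hL.rpow_const (p := 1 - p) (Or.inl hv.ne')).div_const
    (c * (p - 1))).neg.congr_deriv ?_
  rw [show 1 - p - 1 = -p by ring]
  field_simp [show p - 1 ≠ 0 by linarith]
  ring

theorem tendsto_affine_rpow_one_sub_atTop (hc : 0 < c) (hp : 1 < p) :
    Tendsto (fun w => -((c * w + d) ^ (1 - p) / (c * (p - 1)))) atTop (𝓝 0) := by
  have hL : Tendsto (fun w => c * w + d) atTop atTop :=
    tendsto_atTop_add_const_right _ d (tendsto_id.const_mul_atTop hc)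
  have hpow := (tendsto_rpow_neg_atTop (by linarith : 0 < p - 1)).comp hL
  rw [neg_sub] at hpow
  simpa using (hpow.div_const (c * (p - 1))).neg

theorem integrableOn_Ioi_affine_rpow_neg (hc : 0 < c) (hp : 1 < p) (ht : 0 < c * t + d) :
    IntegrableOn (fun v => (c * v + d) ^ (-p)) (Ioi t) :=
  integrableOn_Ioi_deriv_of_nonneg'
    (fun v hv => hasDerivAt_affine_rpow_one_sub hc hp (by nlinarith [mem_Ici.1 hv]))
    (fun v hv => rpow_nonneg (by nlinarith [mem_Ioi.1 hv]) _)
    (tendsto_affine_rpow_one_sub_atTop hc hp)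

theorem integral_Ioi_affine_rpow_neg (hc : 0 < c) (hp : 1 < p) (ht : 0 < c * t + d) :
    ∫ v in Ioi t, (c * v + d) ^ (-p) = (c * t + d) ^ (1 - p) / (c * (p - 1)) := by
  rw [integral_Ioi_of_hasDerivAt_of_nonneg'
    (fun v hv => hasDerivAt_affine_rpow_one_sub hc hp (by nlinarith [mem_Ici.1 hv]))
    (fun v hv => rpow_nonneg (by nlinarith [mem_Ioi.1 hv]) _)
    (tendsto_affine_rpow_one_sub_atTop hc hp)]
  ring

end AffineRpow

theorem IsCDF.lt_one_of_virtualValue_eq_zero {F f : ℝ → ℝ} (hcdf : IsCDF F f) {r : ℝ}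
    (hr : r ≠ 0) (hmon : virtualValue F f r = 0) : F r < 1 := by
  refine (hcdf.le_one r).lt_of_ne fun hFr => hr ?_
  simpa [virtualValue, hFr] using hmon

namespace IsAlphaSR

variable {α r : ℝ} {F f : ℝ → ℝ}

theorem density_mul_le_tail (hSR : IsAlphaSR α F f) (hcdf : IsCDF F f)
    (hmon : virtualValue F f r = 0) (hFr : F r < 1) {u : ℝ} (hu : 0 ≤ u) (hur : u < r) :
    f u * ((1 - α) * u + α * r) ≤ 1 - F u := by
  have hfu : 0 < f u := hcdf.f_pos u hu ((hcdf.mono hur.le).trans_lt hFr)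
  have hsr := hSR u r hu hur hFr
  rw [hmon, virtualValue] at hsr
  rw [mul_comm, ← le_div_iff₀ hfu]
  linarith

theorem tail_le_density_mul (hSR : IsAlphaSR α F f) (hcdf : IsCDF F f)
    (hmon : virtualValue F f r = 0) (hr : 0 ≤ r) {u : ℝ} (hru : r < u) (hFu : F u < 1) :
    1 - F u ≤ f u * ((1 - α) * u + α * r) := by
  have hfu : 0 < f u := hcdf.f_pos u (hr.trans hru.le) hFu
  have hsr := hSR r u hr hru hFu
  rw [hmon, virtualValue] at hsr
  rw [mul_comm, ← div_le_iff₀ hfu]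
  linarith

end IsAlphaSR

/-- `(1 - F v) / (1 - G v)` up to a constant factor, where `1 - G v = (ℓ v / r) ^ (-1/(1-α))`
with `ℓ v = (1 - α) v + α r` is the tail of the `α`-SR distribution with virtual valuation
`α (v - r)`. -/
noncomputable def tailRatio (α r : ℝ) (F : ℝ → ℝ) (v : ℝ) : ℝ :=
  (1 - F v) * ((1 - α) * v + α * r) ^ (1 / (1 - α))

theorem hasDerivAt_tailRatio {α r v f' : ℝ} {F : ℝ → ℝ} (hα : α ≠ 1) (hF : HasDerivAt F f' v)
    (hL : 0 < (1 - α) * v + α * r) :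
    HasDerivAt (tailRatio α r F)
      (((1 - α) * v + α * r) ^ (1 / (1 - α) - 1) * (1 - F v - f' * ((1 - α) * v + α * r))) v := by
  have h1α : 1 - α ≠ 0 := sub_ne_zero.2 hα.symm
  have hL' : HasDerivAt (fun w => (1 - α) * w + α * r) (1 - α) v := by
    simpa using ((hasDerivAt_id v).const_mul (1 - α)).add_const (α * r)
  refine ((hF.const_sub 1).mul (hL'.rpow_const (p := 1 / (1 - α)) (Or.inl hL.ne'))).congr_deriv ?_
  rw [rpow_sub_one hL.ne']
  field_simp
  ring

theorem IsCDF.tailRatio_nonneg {α r v : ℝ} {F f : ℝ → ℝ} (hcdf : IsCDF F f)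
    (hL : 0 ≤ (1 - α) * v + α * r) : 0 ≤ tailRatio α r F v :=
  mul_nonneg (sub_nonneg.2 (hcdf.le_one v)) (rpow_nonneg hL _)

theorem tailRatio_mul_rpow_neg {α r v : ℝ} {F : ℝ → ℝ} (hL : 0 < (1 - α) * v + α * r) :
    tailRatio α r F v * ((1 - α) * v + α * r) ^ (-(1 / (1 - α))) = 1 - F v := by
  rw [tailRatio, mul_assoc, ← rpow_add hL, add_neg_cancel, rpow_zero, mul_one]

namespace IsAlphaSR

variable {α r : ℝ} {F f : ℝ → ℝ}

theorem monotoneOn_tailRatio (hSR : IsAlphaSR α F f) (hcdf : IsCDF F f) (hα0 : 0 < α)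
    (hα1 : α < 1) (hr : 0 < r) (hmon : virtualValue F f r = 0) :
    MonotoneOn (tailRatio α r F) (Icc 0 r) := by
  have hL : ∀ v ∈ Icc 0 r, 0 < (1 - α) * v + α * r := fun v hv => by nlinarith [hv.1]
  have hW := fun v (hv : v ∈ Icc 0 r) =>
    hasDerivAt_tailRatio hα1.ne (hcdf.hasDeriv v hv.1) (hL v hv)
  refine monotoneOn_of_deriv_nonneg (convex_Icc 0 r)
    (fun v hv => (hW v hv).continuousAt.continuousWithinAt)
    (fun v hv => (hW v (interior_subset hv)).differentiableAt.differentiableWithinAt)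
    fun v hv => ?_
  rw [(hW v (interior_subset hv)).deriv]
  rw [interior_Icc] at hv
  exact mul_nonneg (rpow_nonneg (hL v (Ioo_subset_Icc_self hv)).le _) (sub_nonneg.2
    (hSR.density_mul_le_tail hcdf hmon (hcdf.lt_one_of_virtualValue_eq_zero hr.ne' hmon)
      hv.1.le hv.2))

theorem antitoneOn_tailRatio (hSR : IsAlphaSR α F f) (hcdf : IsCDF F f) (hα0 : 0 < α)
    (hα1 : α < 1) (hr : 0 < r) (hmon : virtualValue F f r = 0) :
    AntitoneOn (tailRatio α r F) (Ici r) := by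
  have hL : ∀ v ∈ Ici r, 0 < (1 - α) * v + α * r := fun v hv => by nlinarith [mem_Ici.1 hv]
  have hW := fun v (hv : v ∈ Ici r) =>
    hasDerivAt_tailRatio hα1.ne (hcdf.hasDeriv v (hr.le.trans hv)) (hL v hv)
  intro p hp v hv hpv
  rcases (hcdf.le_one v).lt_or_eq with hFv | hFv
  · have hpv_sub : Icc p v ⊆ Ici r := fun u hu => hp.trans hu.1
    refine antitoneOn_of_deriv_nonpos (convex_Icc p v)
      (fun u hu => (hW u (hpv_sub hu)).continuousAt.continuousWithinAt)
      (fun u hu => (hW u (hpv_sub (interior_subset hu))).differentiableAt.differentiableWithinAt)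
      (fun u hu => ?_) (left_mem_Icc.2 hpv) (right_mem_Icc.2 hpv) hpv
    rw [(hW u (hpv_sub (interior_subset hu))).deriv]
    rw [interior_Icc] at hu
    exact mul_nonpos_of_nonneg_of_nonpos (rpow_nonneg (hL u (hp.trans hu.1.le)).le _)
      (sub_nonpos.2 (hSR.tail_le_density_mul hcdf hmon hr.le (hp.trans_lt hu.1)
        ((hcdf.mono hu.2.le).trans_lt hFv)))
  · rw [tailRatio, tailRatio, hFv, sub_self, zero_mul]
    exact hcdf.tailRatio_nonneg (hL p hp).le

theorem tailRatio_le_tailRatio_max (hSR : IsAlphaSR α F f) (hcdf : IsCDF F f) (hα0 : 0 < α)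
    (hα1 : α < 1) (hr : 0 < r) (hmon : virtualValue F f r = 0) {t v : ℝ} (ht : 0 ≤ t)
    (htv : t ≤ v) : tailRatio α r F v ≤ tailRatio α r F (max t r) := by
  have hmono := hSR.monotoneOn_tailRatio hcdf hα0 hα1 hr hmon
  have hanti := hSR.antitoneOn_tailRatio hcdf hα0 hα1 hr hmon
  rcases le_total r t with hrt | htr
  · rw [max_eq_left hrt]
    exact hanti hrt (hrt.trans htv) htv
  · rw [max_eq_right htr]
    rcases le_total v r with hvr | hrv
    · exact hmono ⟨ht.trans htv, hvr⟩ ⟨hr.le, le_rfl⟩ hvr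
    · exact hanti self_mem_Ici hrv hrv

end IsAlphaSR

theorem revenue_vs_welfare_extremal {α r t : ℝ} (hα0 : 0 < α) (hα1 : α < 1) (hr : 0 < r)
    (ht : 0 ≤ t) :
    α ^ (1 / (1 - α)) * (t * ((1 - α) * t + α * r) ^ (-(1 / (1 - α))) +
        ∫ v in Ioi t, ((1 - α) * v + α * r) ^ (-(1 / (1 - α)))) ≤
      max t r * ((1 - α) * max t r + α * r) ^ (-(1 / (1 - α))) := by
  have h1α : 0 < 1 - α := by linarith
  set β := 1 / (1 - α) with hβ
  have hβ1 : 1 < β := by rw [hβ, lt_div_iff₀ h1α]; linarith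
  have hcβ : (1 - α) * (β - 1) = α := by rw [hβ]; field_simp; ring
  set u := (1 - α) * t + α * r with hu
  have hu0 : 0 < u := by positivity
  have hA : 0 < α ^ β := by positivity
  rw [integral_Ioi_affine_rpow_neg h1α hβ1 hu0, hcβ, rpow_neg hu0.le, rpow_one_sub' hu0.le
    (by linarith)]
  have hX : 0 < u ^ β := by positivity
  rcases le_total r t with hrt | htr
  · rw [max_eq_left hrt, ← hu, rpow_neg hu0.le]
    have hα := rpow_one_div_one_sub_mul_one_add_le_self hα0 hα1
    rw [← hβ] at hα
    field_simp
    nlinarith [mul_le_mul_of_nonneg_left hrt (mul_pos hA hα0).le,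
      mul_le_mul_of_nonneg_right hα ht]
  · rw [max_eq_right htr, show (1 - α) * r + α * r = r by ring, rpow_neg hr.le]
    have hbern := rpow_one_div_mul_add_le_mul_add_mul_rpow (mul_pos hα0 hr) h1α (by linarith) ht
    rw [← hβ, mul_rpow hα0.le hr.le, add_comm (α * r) ((1 - α) * t), ← hu] at hbern
    have hR : 0 < r ^ β := by positivity
    field_simp
    nlinarith

theorem revenue_vs_welfare (α : ℝ) (F f : ℝ → ℝ)
    (hα0 : 0 < α) (hα1 : α < 1)
    (hcdf : IsCDF F f) (hSR : IsAlphaSR α F f)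
    (hmean : IntegrableOn (fun v => 1 - F v) (Set.Ioi 0))
    (r : ℝ) (hr : 0 < r) (hmon : virtualValue F f r = 0)
    (t : ℝ) (ht : 0 ≤ t) :
    max t r * (1 - F (max t r)) ≥
      α ^ (1 / (1 - α) : ℝ) * (t * (1 - F t) + ∫ v in Set.Ioi t, (1 - F v)) := by
  have h1α : 0 < 1 - α := by linarith
  have hL : ∀ v, 0 ≤ v → 0 < (1 - α) * v + α * r := fun v hv => by positivity
  set s := max t r
  have hs : 0 ≤ s := ht.trans (le_max_left t r)
  set G : ℝ → ℝ := fun v => ((1 - α) * v + α * r) ^ (-(1 / (1 - α)))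
  set W := tailRatio α r F s
  have hdom : ∀ v, t ≤ v → 1 - F v ≤ W * G v := fun v hv => by
    rw [← tailRatio_mul_rpow_neg (hL v (ht.trans hv))]
    exact mul_le_mul_of_nonneg_right (hSR.tailRatio_le_tailRatio_max hcdf hα0 hα1 hr hmon ht hv)
      (rpow_nonneg (hL v (ht.trans hv)).le _)
  have hint : ∫ v in Ioi t, (1 - F v) ≤ W * ∫ v in Ioi t, G v := by
    rw [← integral_const_mul]
    exact setIntegral_mono_on (hmean.mono_set (Ioi_subset_Ioi ht))
      ((integrableOn_Ioi_affine_rpow_neg h1α (by rw [lt_div_iff₀ h1α]; linarith)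
        (hL t ht)).const_mul _) measurableSet_Ioi fun v hv => hdom v hv.le
  calc α ^ (1 / (1 - α)) * (t * (1 - F t) + ∫ v in Ioi t, (1 - F v))
      ≤ α ^ (1 / (1 - α)) * (W * (t * G t + ∫ v in Ioi t, G v)) := by
        have := mul_le_mul_of_nonneg_left (hdom t le_rfl) ht
        gcongr
        linarith
    _ = W * (α ^ (1 / (1 - α)) * (t * G t + ∫ v in Ioi t, G v)) := by ring
    _ ≤ W * (s * G s) := mul_le_mul_of_nonneg_left (revenue_vs_welfare_extremal hα0 hα1 hr ht)
        (hcdf.tailRatio_nonneg (hL s hs).le)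
    _ = s * (1 - F s) := by rw [← tailRatio_mul_rpow_neg (hL s hs)]; ring
end

section
/- Let 0 < α < 1 and let F be an α-SR distribution on the discrete set {1, …, L}, i.e. F : {0,1,…,L} → [0,1] is nondecreasing with F(0) = 0, F(L) = 1 and F(v) > F(v−1) for each v ∈ {1,…,L}, and its discrete virtual valuation φ(v) = v − (1−F(v))/(F(v)−F(v−1)) satisfies φ(y) − φ(x) ≥ α(y−x) for all integers 1 ≤ x < y ≤ L. Then Pr_{v∼F}[φ(v) > αv/2] ≥ (α/(2−α))^{1/(1−α)}, i.e. the sum of F(v)−F(v−1) over all v ∈ {1,…,L} with φ(v) > αv/2 is at least (α/(2−α))^{1/(1−α)}. -/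
/-!
Let `m ≤ L` be the last value with `φ(m) ≤ αm/2` (or `m = 0`), so every `v > m` lies in the event
and its probability is at least `1 − F(m)`. Strong regularity pushes `φ(m) ≤ αm/2` down to
`φ(v) ≤ αv − αm/2` for `v ≤ m`, i.e. the hazard rate at `v` is at most `1/e(v)` with
`e(v) = (1 − α)v + αm/2`. A discrete Grönwall argument, driven by Bernoulli's inequality, shows that
`(1 − F(v)) e(v)^{1/(1−α)}` is nondecreasing on `[0, m]`, whence
`1 − F(m) ≥ (e(0)/e(m))^{1/(1−α)} = (α/(2−α))^{1/(1−α)}`.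
-/

open Finset

noncomputable def discreteVirtualValue (F : ℕ → ℝ) (v : ℕ) : ℝ :=
  (v : ℝ) - (1 - F v) / (F v - F (v - 1))

theorem Nat.exists_le_forall_Ioc_and_not (P : ℕ → Prop) (L : ℕ) :
    ∃ m ≤ L, (0 < m → ¬ P m) ∧ ∀ v ∈ Ioc m L, P v := by
  induction L with
  | zero => exact ⟨0, le_rfl, by simp, by simp⟩
  | succ L ih =>
    by_cases hP : P (L + 1)
    · obtain ⟨m, hmL, hm, hP'⟩ := ih
      refine ⟨m, by omega, hm, fun v hv => ?_⟩
      rw [mem_Ioc] at hv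
      rcases Nat.lt_or_ge L v with h | h
      · rwa [show v = L + 1 by omega]
      · exact hP' v (mem_Ioc.2 ⟨hv.1, h⟩)
    · exact ⟨L + 1, le_rfl, fun _ => hP, by simp⟩

theorem Finset.sum_Ioc_sub_pred {M : Type*} [AddCommGroup M] (f : ℕ → M) {m n : ℕ}
    (hmn : m ≤ n) : ∑ v ∈ Ioc m n, (f v - f (v - 1)) = f n - f m := by
  induction n, hmn using Nat.le_induction with
  | base => simp
  | succ n hmn ih =>
    rw [sum_Ioc_succ_top hmn, ih, Nat.add_sub_cancel]
    abel

theorem one_add_inv_le_div_sub_rpow {c e : ℝ} (hc0 : 0 < c) (hc1 : c ≤ 1) (hce : c < e) :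
    1 + e⁻¹ ≤ (e / (e - c)) ^ c⁻¹ := by
  have he : 0 < e := hc0.trans hce
  have bernoulli : (1 + e⁻¹) ^ c ≤ 1 + c * e⁻¹ :=
    rpow_one_add_le_one_add_mul_self (by linarith [inv_pos.2 he]) hc0.le hc1
  have geometric : 1 + c * e⁻¹ ≤ e / (e - c) := by
    rw [le_div_iff₀ (by linarith), ← div_eq_mul_inv]
    have : c / e * (e - c) = c - c ^ 2 / e := by field_simp
    nlinarith [div_nonneg (sq_nonneg c) he.le]
  calc 1 + e⁻¹ = ((1 + e⁻¹) ^ c) ^ c⁻¹ := by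
        rw [← Real.rpow_mul (by positivity), mul_inv_cancel₀ hc0.ne', Real.rpow_one]
    _ ≤ (e / (e - c)) ^ c⁻¹ :=
        Real.rpow_le_rpow (by positivity) (bernoulli.trans geometric) (by positivity)

theorem survival_mul_rpow_le_of_hazard_le {S : ℕ → ℝ} {a c : ℝ} (ha : 0 < a) (hc0 : 0 < c)
    (hc1 : c ≤ 1) (hS0 : 0 ≤ S 0) {n : ℕ}
    (hS : ∀ k < n, (a + c * (k + 1)) * (S k - S (k + 1)) ≤ S (k + 1)) :
    S 0 * a ^ c⁻¹ ≤ S n * (a + c * n) ^ c⁻¹ := by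
  induction n with
  | zero => simp
  | succ k ih =>
    set e := a + c * k
    have he : 0 < e := by positivity
    have hstep : S k ≤ S (k + 1) * (1 + (e + c)⁻¹) := by
      have hdrop : S k - S (k + 1) ≤ S (k + 1) / (e + c) := by
        rw [le_div_iff₀ (by positivity)]
        linarith [hS k k.lt_succ_self, show a + c * (k + 1) = e + c by ring]
      calc S k ≤ S (k + 1) + S (k + 1) / (e + c) := by linarith
        _ = S (k + 1) * (1 + (e + c)⁻¹) := by ring
    have hSk : S 0 * a ^ c⁻¹ ≤ S k * e ^ c⁻¹ := ih fun j hj => hS j (by omega)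
    have hSk1 : 0 ≤ S (k + 1) := by
      have : 0 ≤ S k := nonneg_of_mul_nonneg_left ((by positivity : 0 ≤ S 0 * a ^ c⁻¹).trans hSk)
        (by positivity)
      nlinarith [inv_pos.2 (add_pos he hc0)]
    have bernoulli := one_add_inv_le_div_sub_rpow hc0 hc1 (by linarith : c < e + c)
    rw [add_sub_cancel_right, Real.div_rpow (by positivity) he.le,
      le_div_iff₀ (by positivity)] at bernoulli
    push_cast
    calc S 0 * a ^ c⁻¹ ≤ S k * e ^ c⁻¹ := hSk
      _ ≤ S (k + 1) * ((1 + (e + c)⁻¹) * e ^ c⁻¹) := by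
          rw [← mul_assoc]; exact mul_le_mul_of_nonneg_right hstep (by positivity)
      _ ≤ S (k + 1) * (a + c * (k + 1)) ^ c⁻¹ := by
          rw [show a + c * (k + 1) = e + c by ring]
          exact mul_le_mul_of_nonneg_left bernoulli hSk1

section StronglyRegular

variable {α : ℝ} {L : ℕ} {F : ℕ → ℝ}

theorem discreteVirtualValue_le_sub_of_le
    (hSR : ∀ x y, 1 ≤ x → x < y → y ≤ L →
      discreteVirtualValue F y - discreteVirtualValue F x ≥ α * ((y : ℝ) - (x : ℝ)))
    {x y : ℕ} (hx : 1 ≤ x) (hxy : x ≤ y) (hy : y ≤ L) :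
    discreteVirtualValue F x ≤ discreteVirtualValue F y - α * ((y : ℝ) - x) := by
  rcases hxy.lt_or_eq with hlt | rfl
  · linarith [hSR x y hx hlt hy]
  · simp

theorem mul_sub_le_one_sub_of_discreteVirtualValue_le
    (hSR : ∀ x y, 1 ≤ x → x < y → y ≤ L →
      discreteVirtualValue F y - discreteVirtualValue F x ≥ α * ((y : ℝ) - (x : ℝ)))
    {m v : ℕ} (hmL : m ≤ L) (hφm : discreteVirtualValue F m ≤ α * m / 2)
    (hv : 1 ≤ v) (hvm : v ≤ m) (hf : F (v - 1) < F v) :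
    ((1 - α) * v + α * m / 2) * (F v - F (v - 1)) ≤ 1 - F v := by
  have hφv := discreteVirtualValue_le_sub_of_le hSR hv hvm hmL
  have hquot : (1 - α) * v + α * m / 2 ≤ (1 - F v) / (F v - F (v - 1)) := by
    unfold discreteVirtualValue at hφv hφm
    linarith
  rwa [le_div_iff₀ (sub_pos.2 hf)] at hquot

end StronglyRegular

theorem discrete_virtual_value_large_prob_general (α : ℝ) (L : ℕ) (F : ℕ → ℝ)
    (hα0 : 0 < α) (hα1 : α < 1)
    (hF0 : F 0 = 0) (hFL : F L = 1)
    (hpos : ∀ v ∈ Finset.Icc 1 L, F (v - 1) < F v)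
    (hSR : ∀ x y, 1 ≤ x → x < y → y ≤ L →
      discreteVirtualValue F y - discreteVirtualValue F x ≥ α * ((y : ℝ) - (x : ℝ))) :
    (α / (2 - α)) ^ (1 / (1 - α) : ℝ) ≤
      ∑ v ∈ (Finset.Icc 1 L).filter
          (fun v => discreteVirtualValue F v > α * (v : ℝ) / 2),
        (F v - F (v - 1)) := by
  obtain ⟨m, hmL, hφm, hlarge⟩ :=
    Nat.exists_le_forall_Ioc_and_not (fun v => discreteVirtualValue F v > α * v / 2) L
  have hsum : 1 - F m ≤ ∑ v ∈ (Icc 1 L).filter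
      (fun v => discreteVirtualValue F v > α * (v : ℝ) / 2), (F v - F (v - 1)) := by
    rw [← hFL, ← sum_Ioc_sub_pred F hmL]
    refine sum_le_sum_of_subset_of_nonneg (fun v hv => ?_) fun v hv _ => ?_
    · have hmv := mem_Ioc.1 hv
      exact mem_filter.2 ⟨mem_Icc.2 ⟨by omega, hmv.2⟩, hlarge v hv⟩
    · exact (sub_pos.2 (hpos v (mem_filter.1 hv).1)).le
  refine le_trans ?_ hsum
  rw [one_div]
  rcases m.eq_zero_or_pos with rfl | hm
  · rw [hF0, sub_zero]
    exact Real.rpow_le_one (by bound) (by rw [div_le_one] <;> linarith) (by bound)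
  have hmR : (1 : ℝ) ≤ m := by exact_mod_cast hm
  have hgrowth := survival_mul_rpow_le_of_hazard_le (S := fun k => 1 - F k)
    (a := α * m / 2) (c := 1 - α) (n := m) (by positivity) (by linarith) (by linarith)
    (by simp [hF0]) fun k hk => by
      have := mul_sub_le_one_sub_of_discreteVirtualValue_le hSR hmL (le_of_not_gt (hφm hm))
        (by omega : 1 ≤ k + 1) hk (hpos (k + 1) (mem_Icc.2 ⟨by omega, by omega⟩))
      push_cast at this
      linarith
  have hratio : α / (2 - α) = α * m / 2 / (α * m / 2 + (1 - α) * m) := by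
    field_simp
    ring
  have hsum_pos : 0 < α * m / 2 + (1 - α) * m := by nlinarith
  rw [hratio, Real.div_rpow (by positivity) hsum_pos.le,
    div_le_iff₀ (Real.rpow_pos_of_pos hsum_pos _)]
  simpa [hF0] using hgrowth

theorem discrete_virtual_value_large_prob (α : ℝ) (L : ℕ) (F : ℕ → ℝ)
    (hα0 : 0 < α) (hα1 : α < 1) (hL : 1 ≤ L)
    (hF0 : F 0 = 0) (hFL : F L = 1)
    (hpos : ∀ v ∈ Finset.Icc 1 L, F (v - 1) < F v)
    (hSR : ∀ x y, 1 ≤ x → x < y → y ≤ L →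
      discreteVirtualValue F y - discreteVirtualValue F x ≥ α * ((y : ℝ) - (x : ℝ))) :
    (α / (2 - α)) ^ (1 / (1 - α) : ℝ) ≤
      ∑ v ∈ (Finset.Icc 1 L).filter
          (fun v => discreteVirtualValue F v > α * (v : ℝ) / 2),
        (F v - F (v - 1)) :=
  discrete_virtual_value_large_prob_general α L F hα0 hα1 hF0 hFL hpos hSR
end

section
/- Let 0 < α < 1, let F be α-SR, and let r > 0 be a monopoly price of F, i.e. φ(r) = 0. Then for every v ≥ r with F(v) < 1, one has v ≤ r + (r/(1−α)) · ( ((1−F(r))/(1−F(v)))^{1−α} − 1 ). (In quantile notation with q(v) = 1−F(v): for q ≤ q(r), the value at quantile q is at most r + (r/(1−α))((q(r)/q)^{1−α} − 1).) -/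
open MeasureTheory Real Filter

/-!
Strong regularity together with `φ(r) = 0` gives `(1 − F x)/f x ≤ (1 − α) x + α r` on `[r, v]`,
i.e. the hazard rate is at least `1/((1 − α) x + α r)`. Integrating from `r` to `v`, the cumulative
hazard `−log (1 − F)` grows at least as fast as `log ((1 − α) x + α r)/(1 − α)`, which gives
`((1 − α) v + α r)/r ≤ ((1 − F r)/(1 − F v))^(1 − α)`; solving for `v` is the claim.
-/

open Set

theorem sub_le_sub_of_hasDerivAt_le {u w u' w' : ℝ → ℝ} {a b : ℝ} (hab : a ≤ b)
    (hu : ∀ x ∈ Icc a b, HasDerivAt u (u' x) x) (hw : ∀ x ∈ Icc a b, HasDerivAt w (w' x) x)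
    (hle : ∀ x ∈ Icc a b, u' x ≤ w' x) :
    u b - u a ≤ w b - w a := by
  have hderiv : ∀ x ∈ Icc a b, HasDerivAt (fun y => w y - u y) (w' x - u' x) x :=
    fun x hx => (hw x hx).sub (hu x hx)
  have hmono : MonotoneOn (fun y => w y - u y) (Icc a b) := by
    refine monotoneOn_of_hasDerivWithinAt_nonneg (convex_Icc a b)
      (fun x hx => (hderiv x hx).continuousAt.continuousWithinAt)
      (fun x hx => (hderiv x (interior_subset hx)).hasDerivWithinAt)
      (fun x hx => sub_nonneg.mpr (hle x (interior_subset hx)))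
  have := hmono (left_mem_Icc.mpr hab) (right_mem_Icc.mpr hab) hab
  simp only at this
  linarith

section

variable {α : ℝ} {F f : ℝ → ℝ}

theorem hasDerivAt_neg_log_one_sub {x : ℝ} (hF : HasDerivAt F (f x) x) (hx : F x < 1) :
    HasDerivAt (fun y => -log (1 - F y)) (hazardRate F f x) x := by
  have h := ((hF.const_sub 1).log (sub_ne_zero.mpr hx.ne')).neg
  rwa [neg_div, neg_neg] at h

theorem IsAlphaSR.mul_sub_le_virtualValue_sub (hSR : IsAlphaSR α F f) {a x : ℝ} (ha : 0 ≤ a)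
    (hax : a ≤ x) (hx : F x < 1) :
    α * (x - a) ≤ virtualValue F f x - virtualValue F f a := by
  rcases hax.eq_or_lt with rfl | hlt
  · simp
  · exact hSR a x ha hlt hx

theorem IsAlphaSR.inv_le_hazardRate (hcdf : IsCDF F f) (hSR : IsAlphaSR α F f) {r x : ℝ}
    (hr : 0 ≤ r) (hmon : virtualValue F f r = 0) (hrx : r ≤ x) (hx : F x < 1) :
    1 / ((1 - α) * x + α * r) ≤ hazardRate F f x := by
  have hf : 0 < f x := hcdf.f_pos x (hr.trans hrx) hx
  have hq : 0 < 1 - F x := sub_pos.mpr hx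
  have hinv : (1 - F x) / f x ≤ (1 - α) * x + α * r := by
    have := hSR.mul_sub_le_virtualValue_sub hr hrx hx
    rw [hmon, virtualValue] at this
    linarith
  rw [hazardRate, ← one_div_div (1 - F x) (f x)]
  exact one_div_le_one_div_of_le (div_pos hq hf) hinv

theorem IsAlphaSR.div_le_rpow (hcdf : IsCDF F f) (hSR : IsAlphaSR α F f) (hα1 : α < 1)
    {r v : ℝ} (hr : 0 < r) (hmon : virtualValue F f r = 0) (hrv : r ≤ v) (hv : F v < 1) :
    ((1 - α) * v + α * r) / r ≤ ((1 - F r) / (1 - F v)) ^ (1 - α) := by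
  have hβ : 0 < 1 - α := sub_pos.mpr hα1
  have hD : ∀ x ∈ Icc r v, 0 < (1 - α) * x + α * r := fun x hx => by nlinarith [hx.1]
  have hF : ∀ x ∈ Icc r v, F x < 1 := fun x hx => (hcdf.mono hx.2).trans_lt hv
  have hcum := sub_le_sub_of_hasDerivAt_le hrv
    (u := fun x => log ((1 - α) * x + α * r) / (1 - α))
    (u' := fun x => 1 / ((1 - α) * x + α * r))
    (fun x hx => by
      have h := ((((hasDerivAt_id x).const_mul (1 - α)).add_const (α * r)).log
        (hD x hx).ne').div_const (1 - α)
      refine h.congr_deriv ?_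
      simp only [id]
      field_simp)
    (fun x hx => hasDerivAt_neg_log_one_sub (hcdf.hasDeriv x (hr.le.trans hx.1)) (hF x hx))
    (fun x hx => hSR.inv_le_hazardRate hcdf hr.le hmon hx.1 (hF x hx))
  have hqr : 0 < 1 - F r := sub_pos.mpr (hF r (left_mem_Icc.mpr hrv))
  have hqv : 0 < 1 - F v := sub_pos.mpr hv
  have hDv := hD v (right_mem_Icc.mpr hrv)
  have hDr : (1 - α) * r + α * r = r := by ring
  simp only [hDr, ← sub_div] at hcum
  rw [div_le_iff₀' hβ, ← log_div hDv.ne' hr.ne', neg_sub_neg, ← log_div hqr.ne' hqv.ne'] at hcum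
  rw [← log_le_log_iff (div_pos hDv hr) (rpow_pos_of_pos (div_pos hqr hqv) _),
    log_rpow (div_pos hqr hqv)]
  exact hcum

end

theorem value_upper_bound_quantile_general (α : ℝ) (F f : ℝ → ℝ)
    (hα1 : α < 1)
    (hcdf : IsCDF F f) (hSR : IsAlphaSR α F f)
    (r : ℝ) (hr : 0 < r) (hmon : virtualValue F f r = 0)
    (v : ℝ) (hrv : r ≤ v) (hv : F v < 1) :
    v ≤ r + (r / (1 - α)) * (((1 - F r) / (1 - F v)) ^ (1 - α : ℝ) - 1) := by
  have hβ : 0 < 1 - α := sub_pos.mpr hα1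
  calc v = r + (r / (1 - α)) * (((1 - α) * v + α * r) / r - 1) := by
        field_simp
        ring
    _ ≤ r + (r / (1 - α)) * (((1 - F r) / (1 - F v)) ^ (1 - α : ℝ) - 1) := by
      gcongr
      exact hSR.div_le_rpow hcdf hα1 hr hmon hrv hv

theorem value_upper_bound_quantile (α : ℝ) (F f : ℝ → ℝ)
    (hα0 : 0 < α) (hα1 : α < 1)
    (hcdf : IsCDF F f) (hSR : IsAlphaSR α F f)
    (r : ℝ) (hr : 0 < r) (hmon : virtualValue F f r = 0)
    (v : ℝ) (hrv : r ≤ v) (hv : F v < 1) :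
    v ≤ r + (r / (1 - α)) * (((1 - F r) / (1 - F v)) ^ (1 - α : ℝ) - 1) :=
  value_upper_bound_quantile_general α F f hα1 hcdf hSR r hr hmon v hrv hv
end

section
/- Let 0 < α < 1, let F be α-SR, and let r > 0 be a monopoly price of F, i.e. φ(r) = 0. Then for every t ≥ r, ∫_t^∞ (1−F(v)) dv ≤ (1−F(t)) · ((1−α)t + αr)/α ≤ (1−F(t)) · t/α. -/
/-! Strong regularity anchored at `φ(r) = 0` gives `φ(v) ≥ α (v - r)` for `v ≥ r`, that is, the
survival function `S = 1 - F` satisfies `S ≤ f · P` with the affine `P v = (1 - α) v + α r`.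
Hence `S · P ^ (1 / (1 - α))` is nonincreasing on `[t, ∞)`, so `S v ≤ S t · (P t / P v) ^ (1 / (1 - α))`,
and integrating this power of `P` over `(t, ∞)` gives `S t · P t / α`. -/

open MeasureTheory Real Filter

open Set

section AffineRpow

variable {c d t p : ℝ}

private lemma hasDerivAt_affine_rpow_div (hc : 0 < c) (hp : p ≠ -1) {v : ℝ} (hv : 0 < c * v + d) :
    HasDerivAt (fun w => (c * w + d) ^ (p + 1) / (c * (p + 1))) ((c * v + d) ^ p) v := by
  have hlin : HasDerivAt (fun w => c * w + d) c v := by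
    simpa using ((hasDerivAt_id v).const_mul c).add_const d
  have hp1 : p + 1 ≠ 0 := fun h => hp (by linarith)
  have h := (hlin.rpow_const (p := p + 1) (Or.inl hv.ne')).div_const (c * (p + 1))
  rwa [add_sub_cancel_right, mul_div_cancel_left₀ _ (mul_ne_zero hc.ne' hp1)] at h

private lemma tendsto_affine_rpow_div (hc : 0 < c) (hp : p < -1) :
    Tendsto (fun w => (c * w + d) ^ (p + 1) / (c * (p + 1))) atTop (nhds 0) := by
  have hP : Tendsto (fun w => c * w + d) atTop atTop :=
    tendsto_atTop_add_const_right _ d (tendsto_id.const_mul_atTop hc)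
  have h := (tendsto_rpow_neg_atTop (y := -(p + 1)) (by linarith)).comp hP
  simpa using h.div_const (c * (p + 1))

lemma integrableOn_Ioi_affine_rpow (hc : 0 < c) (hp : p < -1) (ht : 0 < c * t + d) :
    IntegrableOn (fun v => (c * v + d) ^ p) (Ioi t) := by
  have hpos : ∀ v ∈ Ici t, 0 < c * v + d := fun v hv => by nlinarith [hv.out]
  exact integrableOn_Ioi_deriv_of_nonneg'
    (fun v hv => hasDerivAt_affine_rpow_div hc hp.ne (hpos v hv))
    (fun v hv => (rpow_pos_of_pos (hpos v hv.out.le) p).le) (tendsto_affine_rpow_div hc hp)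

lemma integral_Ioi_affine_rpow (hc : 0 < c) (hp : p < -1) (ht : 0 < c * t + d) :
    ∫ v in Ioi t, (c * v + d) ^ p = -(c * t + d) ^ (p + 1) / (c * (p + 1)) := by
  have hpos : ∀ v ∈ Ici t, 0 < c * v + d := fun v hv => by nlinarith [hv.out]
  rw [integral_Ioi_of_hasDerivAt_of_nonneg'
    (fun v hv => hasDerivAt_affine_rpow_div hc hp.ne (hpos v hv))
    (fun v hv => (rpow_pos_of_pos (hpos v hv.out.le) p).le) (tendsto_affine_rpow_div hc hp)]
  ring

end AffineRpow

section TailBound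

variable {S s : ℝ → ℝ} {c d t : ℝ}

lemma antitoneOn_mul_affine_rpow_inv (hc : 0 < c) (ht : 0 < c * t + d)
    (hS : ∀ v, t ≤ v → HasDerivAt S (-s v) v) (hle : ∀ v, t ≤ v → S v ≤ s v * (c * v + d)) :
    AntitoneOn (fun v => S v * (c * v + d) ^ c⁻¹) (Ici t) := by
  have hpos : ∀ v, t ≤ v → 0 < c * v + d := fun v hv => by nlinarith
  have hderiv : ∀ v, t ≤ v → HasDerivAt (fun v => S v * (c * v + d) ^ c⁻¹)
      ((c * v + d) ^ (c⁻¹ - 1) * (S v - s v * (c * v + d))) v := by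
    intro v hv
    have hlin : HasDerivAt (fun w => c * w + d) c v := by
      simpa using ((hasDerivAt_id v).const_mul c).add_const d
    have h := (hS v hv).mul (hlin.rpow_const (p := c⁻¹) (Or.inl (hpos v hv).ne'))
    refine h.congr_deriv ?_
    have hP := (hpos v hv).ne'
    have hpow : (c * v + d) ^ c⁻¹ = (c * v + d) ^ (c⁻¹ - 1) * (c * v + d) := by
      rw [rpow_sub_one hP, div_mul_cancel₀ _ hP]
    rw [mul_inv_cancel₀ hc.ne', one_mul, hpow]
    ring
  refine antitoneOn_of_hasDerivWithinAt_nonpos (convex_Ici t)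
    (fun v hv => (hderiv v hv).continuousAt.continuousWithinAt)
    (fun v hv => (hderiv v (interior_subset hv)).hasDerivWithinAt) (fun v hv => ?_)
  have hv' : t ≤ v := interior_subset hv
  exact mul_nonpos_of_nonneg_of_nonpos (rpow_nonneg (hpos v hv').le _)
    (sub_nonpos.2 (hle v hv'))

lemma setIntegral_Ioi_le_of_le_mul_affine (hc0 : 0 < c) (hc1 : c < 1) (ht : 0 < c * t + d)
    (hS : ∀ v, t ≤ v → HasDerivAt S (-s v) v) (hle : ∀ v, t ≤ v → S v ≤ s v * (c * v + d))
    (hS0 : ∀ v, t < v → 0 ≤ S v) :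
    ∫ v in Ioi t, S v ≤ S t * (c * t + d) / (1 - c) := by
  have hp : -c⁻¹ < -1 := neg_lt_neg ((one_lt_inv₀ hc0).2 hc1)
  set K := S t * (c * t + d) ^ c⁻¹
  have hdom : ∀ v ∈ Ioi t, S v ≤ K * (c * v + d) ^ (-c⁻¹) := by
    intro v hv
    have hPv : 0 < c * v + d := by nlinarith [hv.out]
    calc S v = S v * (c * v + d) ^ c⁻¹ * (c * v + d) ^ (-c⁻¹) := by
          rw [mul_assoc, ← rpow_add hPv, add_neg_cancel, rpow_zero, mul_one]
      _ ≤ K * (c * v + d) ^ (-c⁻¹) := by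
          gcongr
          exact antitoneOn_mul_affine_rpow_inv hc0 ht hS hle self_mem_Ici hv.out.le hv.out.le
  have hint := (integrableOn_Ioi_affine_rpow hc0 hp ht).const_mul K
  have hSint : IntegrableOn S (Ioi t) := by
    refine hint.mono' ?_ ((ae_restrict_iff' measurableSet_Ioi).2 (ae_of_all _ fun v hv => ?_))
    · exact ContinuousOn.aestronglyMeasurable
        (fun v hv => (hS v hv.out.le).continuousAt.continuousWithinAt) measurableSet_Ioi
    · rw [norm_of_nonneg (hS0 v hv)]
      exact hdom v hv
  have hPt : (c * t + d) ^ c⁻¹ * (c * t + d) ^ (-c⁻¹ + 1) = c * t + d := by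
    rw [← rpow_add ht, add_neg_cancel_left, rpow_one]
  calc ∫ v in Ioi t, S v ≤ ∫ v in Ioi t, K * (c * v + d) ^ (-c⁻¹) :=
        setIntegral_mono_on hSint hint measurableSet_Ioi hdom
    _ = K * (-(c * t + d) ^ (-c⁻¹ + 1) / (c * (-c⁻¹ + 1))) := by
        rw [integral_const_mul, integral_Ioi_affine_rpow hc0 hp ht]
    _ = S t * (c * t + d) / (1 - c) := by
        rw [mul_add, mul_neg, mul_inv_cancel₀ hc0.ne', mul_one, mul_div_assoc', mul_neg,
          mul_assoc, hPt, ← neg_div_neg_eq, neg_neg, neg_add', neg_neg]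

end TailBound

section VirtualValue

variable {α r v : ℝ} {F f : ℝ → ℝ}

lemma IsCDF.density_nonneg (hF : IsCDF F f) (hv : 0 ≤ v) : 0 ≤ f v :=
  (hF.hasDeriv v hv).deriv ▸ hF.mono.deriv_nonneg

lemma one_sub_eq_density_mul_sub_virtualValue (hf : f v ≠ 0) :
    1 - F v = f v * (v - virtualValue F f v) := by
  rw [virtualValue, sub_sub_cancel, mul_div_cancel₀ _ hf]

lemma IsAlphaSR.virtualValue_add_le (hSR : IsAlphaSR α F f) (hr : 0 ≤ r) (hrv : r ≤ v)
    (hFv : F v < 1) : virtualValue F f r + α * (v - r) ≤ virtualValue F f v := by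
  rcases hrv.eq_or_lt with rfl | hlt
  · simp
  · linarith [hSR r v hr hlt hFv]

lemma one_sub_le_density_mul_of_virtualValue_eq_zero (hF : IsCDF F f) (hSR : IsAlphaSR α F f)
    (hα : α ≤ 1) (hr : 0 ≤ r) (hmon : virtualValue F f r = 0) (hrv : r ≤ v) :
    1 - F v ≤ f v * ((1 - α) * v + α * r) := by
  have hv : 0 ≤ v := hr.trans hrv
  by_cases hFv : F v < 1
  · have hφ := hSR.virtualValue_add_le hr hrv hFv
    rw [one_sub_eq_density_mul_sub_virtualValue (hF.f_pos v hv hFv).ne']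
    gcongr
    · exact hF.density_nonneg hv
    · linarith
  · rw [le_antisymm (hF.le_one v) (not_lt.1 hFv), sub_self]
    exact mul_nonneg (hF.density_nonneg hv)
      (by nlinarith [mul_nonneg (sub_nonneg.2 hα) (sub_nonneg.2 hrv)])

end VirtualValue

theorem tail_integral_bound (α : ℝ) (F f : ℝ → ℝ)
    (hα0 : 0 < α) (hα1 : α < 1)
    (hcdf : IsCDF F f) (hSR : IsAlphaSR α F f)
    (r : ℝ) (hr : 0 < r) (hmon : virtualValue F f r = 0)
    (t : ℝ) (hrt : r ≤ t) :
    (∫ v in Set.Ioi t, (1 - F v)) ≤ (1 - F t) * ((1 - α) * t + α * r) / α ∧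
      (1 - F t) * ((1 - α) * t + α * r) / α ≤ (1 - F t) * t / α := by
  have hPt : 0 < (1 - α) * t + α * r := by nlinarith
  refine ⟨?_, ?_⟩
  · have h := setIntegral_Ioi_le_of_le_mul_affine (S := fun v => 1 - F v) (s := f)
      (sub_pos.2 hα1) (sub_lt_self 1 hα0) hPt
      (fun v hv => (hcdf.hasDeriv v (by linarith)).const_sub 1)
      (fun v hv => one_sub_le_density_mul_of_virtualValue_eq_zero hcdf hSR hα1.le hr.le hmon
        (hrt.trans hv))
      (fun v _ => sub_nonneg.2 (hcdf.le_one v))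
    rwa [sub_sub_cancel] at h
  · have hFt : 0 ≤ 1 - F t := sub_nonneg.2 (hcdf.le_one t)
    gcongr
    nlinarith
end

section
/- Let 0 < α < 1, let F be α-SR, and let r > 0 be a monopoly price of F, i.e. φ(r) = 0. Then for every v ≥ r, 1 − F(v) ≤ (1−F(r)) · ( ((1−α)v + αr)/r )^{−1/(1−α)}. Equivalently, the cumulative hazard rate satisfies H(v) − H(r) ≥ (1/(1−α)) · ln( ((1−α)v + αr)/r ). -/
open MeasureTheory Real Filter
open Topology

private lemma mono_hasDerivAt_nonneg {F : ℝ → ℝ} (hf : Monotone F) {d x : ℝ}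
    (h : HasDerivAt F d x) : 0 ≤ d := by
  have h' : Tendsto (slope F x) (𝓝[>] x) (𝓝 d) :=
    (hasDerivAt_iff_tendsto_slope.mp h).mono_left (nhdsWithin_mono x fun y hy => ne_of_gt hy)
  refine ge_of_tendsto h' ?_
  filter_upwards [self_mem_nhdsWithin] with y hy
  rw [slope_def_field]
  exact div_nonneg (by linarith [hf (le_of_lt hy)]) (by simp only [Set.mem_Ioi] at hy; linarith)

theorem survival_upper_bound_above_reserve (α : ℝ) (F f : ℝ → ℝ)
    (hα0 : 0 < α) (hα1 : α < 1)
    (hcdf : IsCDF F f) (hSR : IsAlphaSR α F f)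
    (r : ℝ) (hr : 0 < r) (hmon : virtualValue F f r = 0)
    (v : ℝ) (hrv : r ≤ v) :
    1 - F v ≤ (1 - F r) * ((((1 - α) * v + α * r) / r) ^ (-(1 / (1 - α)) : ℝ)) := by
  have h1α : 0 < 1 - α := by linarith
  set c : ℝ := 1 / (1 - α) with hc
  have hcpos : 0 < c := by positivity
  have hc1 : c * (1 - α) = 1 := by rw [hc]; exact one_div_mul_cancel (ne_of_gt h1α)
  -- monopoly price facts
  have hfr : f r ≠ 0 := by
    intro h0
    unfold virtualValue at hmon
    rw [h0, div_zero] at hmon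
    linarith
  have hfrra : f r * r = 1 - F r := by
    unfold virtualValue at hmon
    have : (1 - F r) / f r = r := by linarith
    field_simp at this
    linarith
  -- key pointwise inequality : 1 - F x ≤ f x * ((1-α) x + α r) for x ≥ r
  have key : ∀ x, r ≤ x → 1 - F x ≤ f x * ((1 - α) * x + α * r) := by
    intro x hx
    rcases lt_or_eq_of_le (hcdf.le_one x) with hFx | hFx
    · rcases eq_or_lt_of_le hx with heq | hlt
      · subst heq
        nlinarith
      · have hsr := hSR r x (le_of_lt hr) hlt hFx
        rw [hmon] at hsr
        unfold virtualValue at hsr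
        have hfx : 0 < f x := hcdf.f_pos x (by linarith) hFx
        have hdiv : (1 - F x) / f x ≤ (1 - α) * x + α * r := by nlinarith
        calc 1 - F x = (1 - F x) / f x * f x := by field_simp
        _ ≤ ((1 - α) * x + α * r) * f x :=
            mul_le_mul_of_nonneg_right hdiv (le_of_lt hfx)
        _ = f x * ((1 - α) * x + α * r) := by ring
    · have hfx0 : 0 ≤ f x := mono_hasDerivAt_nonneg hcdf.mono (hcdf.hasDeriv x (by linarith))
      have hz : 1 - F x = 0 := by linarith
      rw [hz]
      exact mul_nonneg hfx0 (by nlinarith)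
  -- the comparison function
  set D : ℝ → ℝ := fun x => (1 - F x) * (((1 - α) * x + α * r) / r) ^ c with hD
  have hderiv : ∀ x, r ≤ x → HasDerivAt D
      (-(f x) * (((1 - α) * x + α * r) / r) ^ c
        + (1 - F x) * ((1 - α) / r * c * (((1 - α) * x + α * r) / r) ^ (c - 1))) x := by
    intro x hx
    have hux : 0 < (1 - α) * x + α * r := by nlinarith
    have hb : 0 < ((1 - α) * x + α * r) / r := div_pos hux hr
    have hF' := hcdf.hasDeriv x (by linarith)
    have h2 : HasDerivAt (fun y => 1 - F y) (-(f x)) x := hF'.const_sub 1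
    have h3 : HasDerivAt (fun y => ((1 - α) * y + α * r) / r) ((1 - α) / r) x := by
      have h3' := (((hasDerivAt_id x).const_mul (1 - α)).add_const (α * r)).div_const r
      simpa using h3'
    have h4 := h3.rpow_const (p := c) (Or.inl (ne_of_gt hb))
    exact h2.mul h4
  have hant : AntitoneOn D (Set.Icc r v) := by
    apply antitoneOn_of_deriv_nonpos (convex_Icc r v)
    · exact fun x hx => (hderiv x hx.1).continuousAt.continuousWithinAt
    · rw [interior_Icc]
      exact fun x hx => (hderiv x (le_of_lt hx.1)).differentiableAt.differentiableWithinAt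
    · intro x hx
      rw [interior_Icc] at hx
      rw [(hderiv x (le_of_lt hx.1)).deriv]
      set u : ℝ := (1 - α) * x + α * r with hu
      have hux : 0 < u := by nlinarith [hx.1]
      have hb : 0 < u / r := div_pos hux hr
      set P : ℝ := (u / r) ^ (c - 1) with hP
      have hPpos : 0 < P := Real.rpow_pos_of_pos hb _
      have hbc : (u / r) ^ c = P * (u / r) := by
        rw [hP, ← Real.rpow_add_one (ne_of_gt hb) (c - 1), sub_add_cancel]
      rw [hbc]
      have hkey := key x (le_of_lt hx.1)
      have h5 : (1 - F x) * (P / r) ≤ f x * u * (P / r) :=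
        mul_le_mul_of_nonneg_right hkey (by positivity)
      have e1 : (1 - F x) * ((1 - α) / r * c * P) = (1 - F x) * (P / r) * (c * (1 - α)) := by
        ring
      rw [hc1, mul_one] at e1
      have e2 : f x * u * (P / r) = f x * (P * (u / r)) := by ring
      rw [e1]
      linarith [h5, e2.symm.le]
  -- conclude
  have hDle : D v ≤ D r := hant ⟨le_refl r, hrv⟩ ⟨hrv, le_refl v⟩ hrv
  have hDr : D r = 1 - F r := by
    have hone : ((1 - α) * r + α * r) / r = 1 := by field_simp; ring
    rw [hD]
    simp only [hone, Real.one_rpow, mul_one]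
  have hbv : 0 < ((1 - α) * v + α * r) / r := div_pos (by nlinarith) hr
  rw [Real.rpow_neg (le_of_lt hbv), ← div_eq_mul_inv,
    le_div_iff₀ (Real.rpow_pos_of_pos hbv c)]
  rw [hDr] at hDle
  exact hDle
end
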